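/- For all complex numbers ψ₁, ψ₂, setting φ = (φ₁, φ₂, φ₃) ∈ ℂ³ with φ₁ = (conj ψ₂)² − ψ₁², φ₂ = i((conj ψ₂)² + ψ₁²), φ₃ = 2 i ψ₁ (conj ψ₂), one has −2i (φ ×_e φ̄) = 4(|ψ₁|² − |ψ₂|²) · (2 Im(ψ₁ψ₂), −2 Re(ψ₁ψ₂), |ψ₁|² + |ψ₂|²), where φ̄ is the componentwise conjugate of φ. Since f_x = φ + φ̄ and f_y = i(φ − φ̄), this computes the Euclidean cross product f⁻¹f_x ×_e f⁻¹f_y of the coordinate tangent vectors; in particular (when ψ₂ ≠ 0, with g = ψ₁/(conj ψ₂)) it is a positive multiple of (|g|²−1)·(2 Im g, −2 Re g, |g|²+1) and vanishes exactly when |ψ₁| = |ψ₂|, i.e. |g| = 1. -/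

import Mathlib

open Complex

/-- The Euclidean cross product on `ℂ³`: the `ℂ`-bilinear extension of the usual
cross product on `ℝ³`. -/
def crossE (a b : Fin 3 → ℂ) : Fin 3 → ℂ :=
  ![a 1 * b 2 - a 2 * b 1, a 2 * b 0 - a 0 * b 2, a 0 * b 1 - a 1 * b 0]

theorem main_id (ψ₁ ψ₂ : ℂ)
    (φ : Fin 3 → ℂ)
    (hφ : φ = ![(starRingEnd ℂ) ψ₂ ^ 2 - ψ₁ ^ 2,
        Complex.I * ((starRingEnd ℂ) ψ₂ ^ 2 + ψ₁ ^ 2),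
        2 * Complex.I * ψ₁ * (starRingEnd ℂ) ψ₂]) :
    (-(2 * Complex.I)) • crossE φ (fun i => (starRingEnd ℂ) (φ i)) =
    ((4 * ((‖ψ₁‖) ^ 2 - (‖ψ₂‖) ^ 2) : ℝ) : ℂ) •
        ![((2 * (ψ₁ * ψ₂).im : ℝ) : ℂ),
          ((-(2 * (ψ₁ * ψ₂).re) : ℝ) : ℂ),
          (((‖ψ₁‖) ^ 2 + (‖ψ₂‖) ^ 2 : ℝ) : ℂ)] := by
  subst hφ
  funext i
  fin_cases i <;>
    simp [crossE, Complex.ext_iff, Complex.sq_norm, Complex.normSq_apply,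
      Complex.mul_re, Complex.mul_im, show ∀ z : ℂ, z ^ 2 = z * z from fun z => sq z] <;> constructor <;> ring

theorem part3 (ψ₁ ψ₂ : ℂ) (h2 : ψ₂ ≠ 0) :
    ((4 * ((‖ψ₁‖) ^ 2 - (‖ψ₂‖) ^ 2) : ℝ) : ℂ) •
        ![((2 * (ψ₁ * ψ₂).im : ℝ) : ℂ),
          ((-(2 * (ψ₁ * ψ₂).re) : ℝ) : ℂ),
          (((‖ψ₁‖) ^ 2 + (‖ψ₂‖) ^ 2 : ℝ) : ℂ)] =
    ((4 * (‖ψ₂‖)^4 * ((‖ψ₁ / (starRingEnd ℂ) ψ₂‖) ^ 2 - 1) : ℝ) : ℂ) •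
            ![((2 * (ψ₁ / (starRingEnd ℂ) ψ₂).im : ℝ) : ℂ),
              ((-(2 * (ψ₁ / (starRingEnd ℂ) ψ₂).re) : ℝ) : ℂ),
              (((‖ψ₁ / (starRingEnd ℂ) ψ₂‖) ^ 2 + 1 : ℝ) : ℂ)] := by
  have hc : (starRingEnd ℂ) ψ₂ ≠ 0 := by simpa using h2
  have hB : ‖ψ₂‖ ≠ 0 := norm_ne_zero_iff.mpr h2
  have hg : ψ₁ = (ψ₁ / (starRingEnd ℂ) ψ₂) * (starRingEnd ℂ) ψ₂ :=
    (div_mul_cancel₀ _ hc).symm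
  set g := ψ₁ / (starRingEnd ℂ) ψ₂ with hgdef
  have hmul : ψ₁ * ψ₂ = g * (((‖ψ₂‖ ^ 2 : ℝ) : ℂ)) := by
    conv_lhs => rw [hg]
    rw [mul_assoc]
    congr 1
    rw [← Complex.normSq_eq_norm_sq, mul_comm, Complex.mul_conj]
  have e_im : (ψ₁ * ψ₂).im = ‖ψ₂‖ ^ 2 * g.im := by
    rw [hmul, mul_comm, Complex.im_ofReal_mul]
  have e_re : (ψ₁ * ψ₂).re = ‖ψ₂‖ ^ 2 * g.re := by
    rw [hmul, mul_comm, Complex.re_ofReal_mul]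
  have k6 : ‖ψ₂‖ ^ 2 * ‖g‖ ^ 2 = ‖ψ₁‖ ^ 2 := by
    rw [hgdef, norm_div, div_pow, Complex.norm_conj, mul_comm, div_mul_cancel₀]
    exact pow_ne_zero 2 hB
  have E_im : (((ψ₁ * ψ₂).im : ℝ) : ℂ) = ((‖ψ₂‖ : ℝ) : ℂ) ^ 2 * ((g.im : ℝ) : ℂ) := by
    exact_mod_cast congrArg (Complex.ofReal) e_im
  have E_re : (((ψ₁ * ψ₂).re : ℝ) : ℂ) = ((‖ψ₂‖ : ℝ) : ℂ) ^ 2 * ((g.re : ℝ) : ℂ) := by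
    exact_mod_cast congrArg (Complex.ofReal) e_re
  have K6 : ((‖ψ₂‖ : ℝ) : ℂ) ^ 2 * ((‖g‖ : ℝ) : ℂ) ^ 2
      = ((‖ψ₁‖ : ℝ) : ℂ) ^ 2 := by
    exact_mod_cast congrArg (Complex.ofReal) k6
  funext i
  fin_cases i <;>
    simp only [Fin.zero_eta, Fin.mk_one, Fin.reduceFinMk, Fin.isValue, Pi.smul_apply,
      smul_eq_mul, Matrix.cons_val_zero, Matrix.cons_val_one, Matrix.cons_val_two,
      Matrix.head_cons, Matrix.tail_cons] <;>
    push_cast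
  · linear_combination (8 * (((‖ψ₁‖ : ℝ) : ℂ) ^ 2 - ((‖ψ₂‖ : ℝ) : ℂ) ^ 2)) * E_im
      - (8 * ((g.im : ℝ) : ℂ) * ((‖ψ₂‖ : ℝ) : ℂ) ^ 2) * K6
  · linear_combination (-8 * (((‖ψ₁‖ : ℝ) : ℂ) ^ 2 - ((‖ψ₂‖ : ℝ) : ℂ) ^ 2)) * E_re
      + (8 * ((g.re : ℝ) : ℂ) * ((‖ψ₂‖ : ℝ) : ℂ) ^ 2) * K6
  · linear_combination
      (-4 * (((‖ψ₂‖ : ℝ) : ℂ) ^ 2 * ((‖g‖ : ℝ) : ℂ) ^ 2 + ((‖ψ₁‖ : ℝ) : ℂ) ^ 2)) * K6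

/-- For the generating spinors of a conformal spacelike immersion `f`,
`−2i(φ ×_e φ̄) = 4(|ψ₁|² − |ψ₂|²)·(2Im(ψ₁ψ₂), −2Re(ψ₁ψ₂), |ψ₁|²+|ψ₂|²)`, computing
the Euclidean cross product `f⁻¹f_x ×_e f⁻¹f_y`; in particular (when `ψ₂ ≠ 0`,
with `g = ψ₁/(conj ψ₂)`) it is a positive multiple of
`(|g|²−1)·(2Im g, −2Re g, |g|²+1)`, and vanishes exactly when `|ψ₁| = |ψ₂|`. -/
theorem spinor_euclidean_cross (ψ₁ ψ₂ : ℂ) :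
    (let φ : Fin 3 → ℂ :=
      ![(starRingEnd ℂ) ψ₂ ^ 2 - ψ₁ ^ 2,
        Complex.I * ((starRingEnd ℂ) ψ₂ ^ 2 + ψ₁ ^ 2),
        2 * Complex.I * ψ₁ * (starRingEnd ℂ) ψ₂];
    let X : Fin 3 → ℂ := (-(2 * Complex.I)) • crossE φ (fun i => (starRingEnd ℂ) (φ i));
    X = ((4 * ((‖ψ₁‖) ^ 2 - (‖ψ₂‖) ^ 2) : ℝ) : ℂ) •
        ![((2 * (ψ₁ * ψ₂).im : ℝ) : ℂ),
          ((-(2 * (ψ₁ * ψ₂).re) : ℝ) : ℂ),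
          (((‖ψ₁‖) ^ 2 + (‖ψ₂‖) ^ 2 : ℝ) : ℂ)] ∧
      (X = 0 ↔ ‖ψ₁‖ = ‖ψ₂‖) ∧
      (ψ₂ ≠ 0 →
        ∃ c : ℝ, 0 < c ∧
          X = ((c * ((‖ψ₁ / (starRingEnd ℂ) ψ₂‖) ^ 2 - 1) : ℝ) : ℂ) •
            ![((2 * (ψ₁ / (starRingEnd ℂ) ψ₂).im : ℝ) : ℂ),
              ((-(2 * (ψ₁ / (starRingEnd ℂ) ψ₂).re) : ℝ) : ℂ),
              (((‖ψ₁ / (starRingEnd ℂ) ψ₂‖) ^ 2 + 1 : ℝ) : ℂ)])) := by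
  intro φ X
  have hmain : X = ((4 * ((‖ψ₁‖) ^ 2 - (‖ψ₂‖) ^ 2) : ℝ) : ℂ) •
      ![((2 * (ψ₁ * ψ₂).im : ℝ) : ℂ),
        ((-(2 * (ψ₁ * ψ₂).re) : ℝ) : ℂ),
        (((‖ψ₁‖) ^ 2 + (‖ψ₂‖) ^ 2 : ℝ) : ℂ)] :=
    main_id ψ₁ ψ₂ φ rfl
  refine ⟨hmain, ⟨?_, ?_⟩, ?_⟩
  · intro h
    have h0 := (hmain.symm.trans h)
    have h3 := congrFun h0 2
    simp only [Pi.smul_apply, smul_eq_mul, Matrix.cons_val_two, Matrix.tail_cons,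
      Matrix.head_cons, Pi.zero_apply, ← Complex.ofReal_mul, Complex.ofReal_eq_zero] at h3
    have hA := norm_nonneg ψ₁
    have hB := norm_nonneg ψ₂
    have h4 : ‖ψ₁‖ ^ 2 = ‖ψ₂‖ ^ 2 := by
      rcases mul_eq_zero.1 h3 with h3 | h3
      · linarith
      · nlinarith [sq_nonneg (‖ψ₁‖), sq_nonneg (‖ψ₂‖)]
    have h5 : (‖ψ₁‖ - ‖ψ₂‖) * (‖ψ₁‖ + ‖ψ₂‖) = 0 := by
      linear_combination h4
    rcases mul_eq_zero.1 h5 with h6 | h6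
    · linarith
    · linarith
  · intro h
    rw [hmain, h]
    simp
  · intro hp
    have hBpos : 0 < ‖ψ₂‖ := norm_pos_iff.mpr hp
    refine ⟨4 * (‖ψ₂‖) ^ 4, by positivity, ?_⟩
    rw [hmain]
    exact part3 ψ₁ ψ₂ hp
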